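/- (Operator form of Proposition 4.2: commutation with the coproduct images of the Heisenberg generators forces the coefficient recursion.) Assume κ'_r ≠ 0 for all r ≥ 1 and q ∈ F is invertible. Let F(μ,ρ,ν,σ) ∈ F be a finitely supported family indexed by quadruples of finite multisets of positive integers and set T := ∑ F(μ,ρ,ν,σ) · (a*_μ ∘ a_ν) ⊗ (a*_ρ ∘ a_σ), an F-linear endomorphism of P ⊗_F P. (a) If T commutes with a_r ⊗ id + q^{−r} (id ⊗ a_r) for every r ≥ 1, then F(μ + {r}, ρ, ν, σ) + q^{−r} F(μ, ρ + {r}, ν, σ) = 0 for all r, μ, ρ, ν, σ. (b) If T commutes with q^r (a_{−r} ⊗ id) + id ⊗ a_{−r} for every r ≥ 1, then F(μ, ρ, ν + {r}, σ) + q^{−r} F(μ, ρ, ν, σ + {r}) = 0 for all r, μ, ρ, ν, σ. -/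

import Mathlib

/-!
The normal-ordered operators `(a*_μ a_ν) ⊗ (a*_ρ a_σ)` are linearly independent: applied to
`X^ν ⊗ X^σ` for a quadruple with `|ν| + |σ|` minimal in the support, only that quadruple's
operator produces the monomial `X^μ ⊗ X^ρ`. Commuting `a_r` past `a*_μ` removes one copy of
`r` from `μ` and produces the factor `κ'_r`, the multiplicity `m_r(μ)` being absorbed by the
normalisation `1/m(μ)!`; dually for `a_{-r}` and `a_ν`. Hence the commutator of `T` with
`a_r ⊗ id + q^{-r} id ⊗ a_r` is `κ'_r` times the operator with coefficients
`F(μ+{r},ρ,ν,σ) + q^{-r} F(μ,ρ+{r},ν,σ)`, and independence turns `[T, Δ(a_r)] = 0` into the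
recursion; part (b) is the same computation on the annihilation side.
-/

open MvPolynomial

noncomputable section

set_option linter.unusedSectionVars false

variable (F : Type*) [Field F] [CharZero F]

abbrev PP (F : Type*) [Field F] : Type _ := MvPolynomial ℕ+ F

/-- `a_{-r}`: multiplication by `X r`. -/
def aNeg (r : ℕ+) : Module.End F (PP F) := LinearMap.mulLeft F (X r)

/-- `a_r := κ'_r • ∂/∂X_r`. -/
def aPos (κ : ℕ+ → F) (r : ℕ+) : Module.End F (PP F) :=
  κ r • ((pderiv r : Derivation F (PP F) (PP F)) : Module.End F (PP F))

lemma aNeg_commute (i j : ℕ+) : Commute (aNeg F i) (aNeg F j) := by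
  apply LinearMap.ext
  intro p
  simp [aNeg, Module.End.mul_apply, mul_left_comm]

lemma pderiv_commute (i j : ℕ+) :
    Commute ((pderiv i : Derivation F (PP F) (PP F)) : Module.End F (PP F))
      ((pderiv j : Derivation F (PP F) (PP F)) : Module.End F (PP F)) := by
  have h : (⁅(pderiv i : Derivation F (PP F) (PP F)),
      (pderiv j : Derivation F (PP F) (PP F))⁆ : Derivation F (PP F) (PP F)) = 0 := by
    apply derivation_ext
    intro k
    simp only [Derivation.commutator_apply, pderiv_X, Pi.single_apply, Derivation.zero_apply]
    split_ifs <;> simp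
  have h2 : (⁅((pderiv i : Derivation F (PP F) (PP F)) : Module.End F (PP F)),
      ((pderiv j : Derivation F (PP F) (PP F)) : Module.End F (PP F))⁆ : Module.End F (PP F)) = 0 := by
    rw [← Derivation.commutator_coe_linear_map, h]
    rfl
  rw [Ring.lie_def] at h2
  exact sub_eq_zero.mp h2

lemma aPos_commute (κ : ℕ+ → F) (i j : ℕ+) : Commute (aPos F κ i) (aPos F κ j) :=
  ((pderiv_commute F i j).smul_left (κ i)).smul_right (κ j)

/-- Product of a pairwise-commuting family of operators over a multiset. -/
def opProd {M : Type*} [Monoid M] (f : ℕ+ → M) (hf : ∀ i j, Commute (f i) (f j))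
    (μ : Multiset ℕ+) : M :=
  (μ.map f).noncommProd (by
    intro x hx y hy _
    obtain ⟨i, _, rfl⟩ := Multiset.mem_map.mp hx
    obtain ⟨j, _, rfl⟩ := Multiset.mem_map.mp hy
    exact hf i j)

/-- `m(μ)! := ∏_r m_r(μ)!`, the product of factorials of part multiplicities. -/
def mfact (μ : Multiset ℕ+) : ℕ := (μ.dedup.map fun r => (μ.count r).factorial).prod

/-- `|μ|`: the weight (sum of the parts) of `μ`. -/
def msum (μ : Multiset ℕ+) : ℕ := (μ.map fun r => (r : ℕ)).sum

/-- The multiset binomial coefficient `[μ ⫶ ν]`. -/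
def mbinom (μ ν : Multiset ℕ+) : F :=
  if ν ≤ μ then (mfact μ : F) / ((mfact (μ - ν) : F) * (mfact ν : F)) else 0

/-- `a*_μ := (1/m(μ)!) ∏_{r∈μ} a_{-r}`. -/
def aStar (μ : Multiset ℕ+) : Module.End F (PP F) :=
  ((mfact μ : F))⁻¹ • opProd (aNeg F) (aNeg_commute F) μ

/-- `a_μ := (1/m(μ)!) ∏_{r∈μ} a_r`. -/
def aLow (κ : ℕ+ → F) (μ : Multiset ℕ+) : Module.End F (PP F) :=
  ((mfact μ : F))⁻¹ • opProd (aPos F κ) (aPos_commute F κ) μ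

/-- `ξ_λ := (1/m(λ)!) ∏_{r∈λ} κ'_r`. -/
def xiCoef (κ : ℕ+ → F) (lam : Multiset ℕ+) : F :=
  ((mfact lam : F))⁻¹ * (lam.map κ).prod

open scoped TensorProduct

/-- `f ⊗ id` acting on `P ⊗ P`. -/
def op1 (f : Module.End F (PP F)) : Module.End F (PP F ⊗[F] PP F) :=
  TensorProduct.map f LinearMap.id

/-- `id ⊗ g` acting on `P ⊗ P`. -/
def op2 (g : Module.End F (PP F)) : Module.End F (PP F ⊗[F] PP F) :=
  TensorProduct.map LinearMap.id g

lemma op1_mul (f f' : Module.End F (PP F)) : op1 F (f * f') = op1 F f * op1 F f' := by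
  simp only [op1, Module.End.mul_eq_comp, ← TensorProduct.map_comp, LinearMap.comp_id]

lemma op2_mul (g g' : Module.End F (PP F)) : op2 F (g * g') = op2 F g * op2 F g' := by
  simp only [op2, Module.End.mul_eq_comp, ← TensorProduct.map_comp, LinearMap.comp_id]

lemma op1_op2_commute (f g : Module.End F (PP F)) : Commute (op1 F f) (op2 F g) := by
  unfold op1 op2
  rw [Commute, SemiconjBy, Module.End.mul_eq_comp, Module.End.mul_eq_comp,
    ← TensorProduct.map_comp, ← TensorProduct.map_comp]
  simp

lemma op1_commute {f f' : Module.End F (PP F)} (h : Commute f f') :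
    Commute (op1 F f) (op1 F f') := by
  rw [Commute, SemiconjBy, ← op1_mul, ← op1_mul, h.eq]

lemma op2_commute {g g' : Module.End F (PP F)} (h : Commute g g') :
    Commute (op2 F g) (op2 F g') := by
  rw [Commute, SemiconjBy, ← op2_mul, ← op2_mul, h.eq]

variable (q : F)

/-- `b_r := a_r ⊗ id + q^{-r} (id ⊗ a_r)`. -/
def bPos (κ : ℕ+ → F) (r : ℕ+) : Module.End F (PP F ⊗[F] PP F) :=
  op1 F (aPos F κ r) + (q⁻¹) ^ (r : ℕ) • op2 F (aPos F κ r)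

/-- `b_{-r} := a_{-r} ⊗ id + q^{-r} (id ⊗ a_{-r})`. -/
def bNeg (r : ℕ+) : Module.End F (PP F ⊗[F] PP F) :=
  op1 F (aNeg F r) + (q⁻¹) ^ (r : ℕ) • op2 F (aNeg F r)

/-- `c_r := q^{-r} (a_r ⊗ id) - id ⊗ a_r`. -/
def cPos (κ : ℕ+ → F) (r : ℕ+) : Module.End F (PP F ⊗[F] PP F) :=
  (q⁻¹) ^ (r : ℕ) • op1 F (aPos F κ r) - op2 F (aPos F κ r)

/-- `c_{-r} := q^{-r} (a_{-r} ⊗ id) - id ⊗ a_{-r}`. -/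
def cNeg (r : ℕ+) : Module.End F (PP F ⊗[F] PP F) :=
  (q⁻¹) ^ (r : ℕ) • op1 F (aNeg F r) - op2 F (aNeg F r)

lemma commute_aux {A B C D : Module.End F (PP F ⊗[F] PP F)} {x y : F}
    (hAC : Commute A C) (hAD : Commute A D) (hBC : Commute B C) (hBD : Commute B D) :
    Commute (x • A - B) (y • C - D) := by
  have eAC := LinearMap.congr_fun hAC.eq
  have eAD := LinearMap.congr_fun hAD.eq
  have eBC := LinearMap.congr_fun hBC.eq
  have eBD := LinearMap.congr_fun hBD.eq
  simp only [Module.End.mul_apply] at eAC eAD eBC eBD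
  rw [Commute, SemiconjBy]
  apply LinearMap.ext
  intro v
  simp only [Module.End.mul_apply, LinearMap.sub_apply, LinearMap.smul_apply, map_sub, map_smul,
    eAC, eAD, eBC, eBD]
  simp only [smul_sub, smul_comm y x]
  abel

lemma cNeg_commute (i j : ℕ+) : Commute (cNeg F q i) (cNeg F q j) := by
  unfold cNeg
  exact commute_aux F (op1_commute F (aNeg_commute F i j))
    (op1_op2_commute F (aNeg F i) (aNeg F j)) (op1_op2_commute F (aNeg F j) (aNeg F i)).symm
    (op2_commute F (aNeg_commute F i j))

lemma cPos_commute (κ : ℕ+ → F) (i j : ℕ+) : Commute (cPos F q κ i) (cPos F q κ j) := by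
  unfold cPos
  exact commute_aux F (op1_commute F (aPos_commute F κ i j))
    (op1_op2_commute F (aPos F κ i) (aPos F κ j))
    (op1_op2_commute F (aPos F κ j) (aPos F κ i)).symm
    (op2_commute F (aPos_commute F κ i j))

/-- `c*_μ := (1/m(μ)!) ∏_{r∈μ} c_{-r}`. -/
def cStar (μ : Multiset ℕ+) : Module.End F (PP F ⊗[F] PP F) :=
  ((mfact μ : F))⁻¹ • opProd (cNeg F q) (cNeg_commute F q) μ

/-- `c_μ := (1/m(μ)!) ∏_{r∈μ} c_r`. -/
def cLow (κ : ℕ+ → F) (μ : Multiset ℕ+) : Module.End F (PP F ⊗[F] PP F) :=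
  ((mfact μ : F))⁻¹ • opProd (cPos F q κ) (cPos_commute F q κ) μ

/-- The operator `T = ∑ F(μ,ρ,ν,σ) (a*_μ ∘ a_ν) ⊗ (a*_ρ ∘ a_σ)` built from a finitely
supported coefficient family indexed by quadruples `(μ, ρ, ν, σ)`. -/
def Tmat (κ : ℕ+ → F)
    (c : (Multiset ℕ+ × Multiset ℕ+ × Multiset ℕ+ × Multiset ℕ+) →₀ F) :
    Module.End F (PP F ⊗[F] PP F) :=
  c.sum fun p coef =>
    coef • TensorProduct.map (aStar F p.1 * aLow F κ p.2.2.1) (aStar F p.2.1 * aLow F κ p.2.2.2)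

namespace Multiset

theorem cons_le_iff_mem_and_le_erase {α : Type*} [DecidableEq α] {a : α} {s t : Multiset α} :
    a ::ₘ s ≤ t ↔ a ∈ t ∧ s ≤ t.erase a := by
  constructor
  · intro h
    have ha : a ∈ t := mem_of_le h (mem_cons_self a s)
    refine ⟨ha, ?_⟩
    rwa [← cons_le_cons_iff a, cons_erase ha]
  · rintro ⟨ha, h⟩
    rw [← cons_erase ha]
    exact cons_le_cons a h

end Multiset

theorem Finsupp.comapDomain_single_eq_ite {α β M : Type*} [Zero M] {f : α → β}
    (hf : Function.Injective f) {g : β → α} {P : β → Prop} [DecidablePred P]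
    (hfg : ∀ b, P b → f (g b) = b) (hP : ∀ a, P (f a)) (b : β) (m : M) :
    comapDomain f (single b m) hf.injOn = if P b then single (g b) m else 0 := by
  classical
  split_ifs with hb
  · conv_lhs => rw [← hfg b hb]
    exact comapDomain_single f (g b) m _
  · ext a
    rw [comapDomain_apply, single_apply, if_neg (by rintro rfl; exact hb (hP a))]
    rfl

theorem commutator_linearCombination {K M ι : Type*} [CommRing K] [AddCommGroup M]
    [Module K M] {v : ι → Module.End K M} {D : Module.End K M} {k : K}
    {Φ : (ι →₀ K) →ₗ[K] ι →₀ K}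
    (h : ∀ i, D * v i - v i * D = k • Finsupp.linearCombination K v (Φ (Finsupp.single i 1)))
    (c : ι →₀ K) :
    D * Finsupp.linearCombination K v c - Finsupp.linearCombination K v c * D
      = k • Finsupp.linearCombination K v (Φ c) := by
  induction c using Finsupp.induction_linear with
  | zero => simp
  | add c d hc hd =>
    simp only [map_add, mul_add, add_mul, smul_add, ← hc, ← hd]
    abel
  | single i b =>
    rw [← Finsupp.smul_single_one, map_smul, map_smul, map_smul, Finsupp.linearCombination_single,
      one_smul, mul_smul_comm, smul_mul_assoc, ← smul_sub, h, smul_comm]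

theorem LinearIndependent.map_eq_zero_of_commute {K M ι : Type*} [Field K] [AddCommGroup M]
    [Module K M] {v : ι → Module.End K M} {D : Module.End K M} {k : K}
    {Φ : (ι →₀ K) →ₗ[K] ι →₀ K} (hv : LinearIndependent K v) (hk : k ≠ 0)
    (h : ∀ i, D * v i - v i * D = k • Finsupp.linearCombination K v (Φ (Finsupp.single i 1)))
    {c : ι →₀ K} (hc : Commute D (Finsupp.linearCombination K v c)) : Φ c = 0 := by
  have hzero : k • Finsupp.linearCombination K v (Φ c) = 0 := by
    rw [← commutator_linearCombination h, hc.eq, sub_self]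
  exact hv.finsuppLinearCombination_injective
    (by rw [(smul_eq_zero.1 hzero).resolve_left hk, map_zero])

theorem mfact_eq_prod_of_subset {μ : Multiset ℕ+} {s : Finset ℕ+} (h : μ.toFinset ⊆ s) :
    mfact μ = ∏ a ∈ s, (μ.count a).factorial :=
  Finset.prod_subset h fun a _ ha => by
    rw [Multiset.count_eq_zero.2 (by simpa using ha), Nat.factorial_zero]

theorem mfact_pos (μ : Multiset ℕ+) : 0 < mfact μ := by
  rw [mfact_eq_prod_of_subset subset_rfl]
  exact Finset.prod_pos fun a _ => Nat.factorial_pos _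

theorem mfact_cons (r : ℕ+) (μ : Multiset ℕ+) :
    mfact (r ::ₘ μ) = (μ.count r + 1) * mfact μ := by
  set s := (r ::ₘ μ).toFinset
  have hr : r ∈ s := by simp [s]
  rw [mfact_eq_prod_of_subset subset_rfl,
    mfact_eq_prod_of_subset (Multiset.toFinset_subset.2 (Multiset.subset_cons μ r)),
    ← Finset.mul_prod_erase s _ hr, ← Finset.mul_prod_erase s _ hr,
    Finset.prod_congr rfl fun a ha => by
      rw [Multiset.count_cons_of_ne (Finset.ne_of_mem_erase ha)],
    Multiset.count_cons_self, Nat.factorial_succ, mul_assoc]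

theorem mfact_eq_count_mul_mfact_erase {r : ℕ+} {μ : Multiset ℕ+} (h : r ∈ μ) :
    mfact μ = μ.count r * mfact (μ.erase r) := by
  conv_lhs => rw [← Multiset.cons_erase h]
  rw [mfact_cons, Multiset.count_erase_self, Nat.sub_add_cancel (Multiset.count_pos.2 h)]

section OpProd

variable {M : Type*} [Monoid M] (f : ℕ+ → M) (hf : ∀ i j, Commute (f i) (f j))

theorem opProd_zero : opProd f hf 0 = 1 := rfl

theorem opProd_cons (a : ℕ+) (μ : Multiset ℕ+) : opProd f hf (a ::ₘ μ) = f a * opProd f hf μ := by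
  simp only [opProd, Multiset.map_cons, Multiset.noncommProd_cons]

theorem opProd_cons' (a : ℕ+) (μ : Multiset ℕ+) : opProd f hf (a ::ₘ μ) = opProd f hf μ * f a := by
  simp only [opProd, Multiset.map_cons, Multiset.noncommProd_cons']

theorem Commute.opProd_right {x : M} (hx : ∀ i, Commute x (f i)) (μ : Multiset ℕ+) :
    Commute x (opProd f hf μ) :=
  Multiset.noncommProd_commute _ _ _ fun _ hy => by
    obtain ⟨i, _, rfl⟩ := Multiset.mem_map.1 hy
    exact hx i

end OpProd

theorem opProd_commutator {K A : Type*} [CommRing K] [Ring A] [Algebra K A] {f : ℕ+ → A}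
    (hf : ∀ i j, Commute (f i) (f j)) {x : A} {r : ℕ+} {k : K}
    (hx : ∀ i, x * f i - f i * x = if i = r then k • 1 else 0)
    (μ : Multiset ℕ+) :
    x * opProd f hf μ - opProd f hf μ * x = ((μ.count r : K) * k) • opProd f hf (μ.erase r) := by
  induction μ using Multiset.induction_on with
  | empty => simp [opProd_zero]
  | cons a μ ih =>
    have leibniz : x * opProd f hf (a ::ₘ μ) - opProd f hf (a ::ₘ μ) * x
        = (x * f a - f a * x) * opProd f hf μ + f a * (x * opProd f hf μ - opProd f hf μ * x) := by
      rw [opProd_cons]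
      noncomm_ring
    rw [leibniz, hx, ih, mul_smul_comm]
    by_cases ha : a = r
    · subst ha
      rw [if_pos rfl, Multiset.erase_cons_head, Multiset.count_cons_self, smul_mul_assoc, one_mul]
      by_cases hm : a ∈ μ
      · rw [← opProd_cons, Multiset.cons_erase hm]
        push_cast
        module
      · simp [Multiset.count_eq_zero_of_notMem hm]
    · rw [if_neg ha, zero_mul, zero_add, Multiset.count_cons_of_ne (Ne.symm ha),
        Multiset.erase_cons_tail _ ha, opProd_cons]

theorem inv_mfact_smul_opProd_commutator {K A : Type*} [Field K] [CharZero K] [Ring A]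
    [Algebra K A] {f : ℕ+ → A} (hf : ∀ i j, Commute (f i) (f j)) {x : A} {r : ℕ+} {k : K}
    (hx : ∀ i, x * f i - f i * x = if i = r then k • 1 else 0) (μ : Multiset ℕ+) :
    x * ((mfact μ : K)⁻¹ • opProd f hf μ) - ((mfact μ : K)⁻¹ • opProd f hf μ) * x
      = if r ∈ μ then k • ((mfact (μ.erase r) : K)⁻¹ • opProd f hf (μ.erase r)) else 0 := by
  rw [mul_smul_comm, smul_mul_assoc, ← smul_sub, opProd_commutator hf hx, smul_smul]
  split_ifs with h
  · rw [smul_smul, mfact_eq_count_mul_mfact_erase h]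
    have hc : (μ.count r : K) ≠ 0 := Nat.cast_ne_zero.2 (Multiset.count_ne_zero.2 h)
    have hm : (mfact (μ.erase r) : K) ≠ 0 := Nat.cast_ne_zero.2 (mfact_pos _).ne'
    congr 1
    push_cast
    field_simp
  · simp [Multiset.count_eq_zero_of_notMem h]

abbrev Quad : Type := Multiset ℕ+ × Multiset ℕ+ × Multiset ℕ+ × Multiset ℕ+

section

variable {F}

theorem aPos_mul_aNeg_sub (κ : ℕ+ → F) (r s : ℕ+) :
    aPos F κ r * aNeg F s - aNeg F s * aPos F κ r = if s = r then κ r • 1 else 0 := by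
  refine LinearMap.ext fun p => ?_
  simp only [LinearMap.sub_apply, Module.End.mul_apply, aPos, aNeg, LinearMap.mulLeft_apply,
    LinearMap.smul_apply, Derivation.coeFn_coe, Derivation.leibniz, pderiv_X]
  split_ifs with h
  · subst h
    simp [smul_eq_C_mul]
    ring
  · simp [Ne.symm h]

theorem aNeg_mul_aPos_sub (κ : ℕ+ → F) (r s : ℕ+) :
    aNeg F r * aPos F κ s - aPos F κ s * aNeg F r = if s = r then (-κ r) • 1 else 0 := by
  refine LinearMap.ext fun p => ?_
  simp only [LinearMap.sub_apply, Module.End.mul_apply, aPos, aNeg, LinearMap.mulLeft_apply,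
    LinearMap.smul_apply, Derivation.coeFn_coe, Derivation.leibniz, pderiv_X]
  split_ifs with h
  · subst h
    simp [smul_eq_C_mul]
    ring
  · simp [h]

theorem aPos_mul_aStar_sub (κ : ℕ+ → F) (r : ℕ+) (μ : Multiset ℕ+) :
    aPos F κ r * aStar F μ - aStar F μ * aPos F κ r
      = if r ∈ μ then κ r • aStar F (μ.erase r) else 0 :=
  inv_mfact_smul_opProd_commutator (aNeg_commute F) (fun s => aPos_mul_aNeg_sub κ r s) μ

theorem aNeg_mul_aLow_sub (κ : ℕ+ → F) (r : ℕ+) (ν : Multiset ℕ+) :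
    aNeg F r * aLow F κ ν - aLow F κ ν * aNeg F r
      = if r ∈ ν then (-κ r) • aLow F κ (ν.erase r) else 0 :=
  inv_mfact_smul_opProd_commutator (aPos_commute F κ) (fun s => aNeg_mul_aPos_sub κ r s) ν

theorem aPos_mul_aStar_mul_aLow_sub (κ : ℕ+ → F) (r : ℕ+) (μ ν : Multiset ℕ+) :
    aPos F κ r * (aStar F μ * aLow F κ ν) - aStar F μ * aLow F κ ν * aPos F κ r
      = if r ∈ μ then κ r • (aStar F (μ.erase r) * aLow F κ ν) else 0 := by
  have hcomm : Commute (aPos F κ r) (aLow F κ ν) :=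
    (Commute.opProd_right _ _ (aPos_commute F κ r) ν).smul_right _
  rw [mul_assoc (aStar F μ), ← hcomm.eq, ← mul_assoc, ← mul_assoc, ← sub_mul,
    aPos_mul_aStar_sub]
  split_ifs <;> simp

theorem aNeg_mul_aStar_mul_aLow_sub (κ : ℕ+ → F) (r : ℕ+) (μ ν : Multiset ℕ+) :
    aNeg F r * (aStar F μ * aLow F κ ν) - aStar F μ * aLow F κ ν * aNeg F r
      = if r ∈ ν then (-κ r) • (aStar F μ * aLow F κ (ν.erase r)) else 0 := by
  have hcomm : Commute (aNeg F r) (aStar F μ) :=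
    (Commute.opProd_right _ _ (aNeg_commute F r) μ).smul_right _
  rw [← mul_assoc, hcomm.eq, mul_assoc, mul_assoc, ← mul_sub, aNeg_mul_aLow_sub]
  split_ifs <;> simp only [mul_smul_comm, mul_zero]

def xPow (s : Multiset ℕ+) : PP F := monomial (Multiset.toFinsupp s) 1

theorem aNeg_xPow (r : ℕ+) (s : Multiset ℕ+) : aNeg F r (xPow s) = xPow (r ::ₘ s) := by
  rw [aNeg, LinearMap.mulLeft_apply, xPow, xPow, X, monomial_mul, ← Multiset.singleton_add,
    Multiset.toFinsupp_add, Multiset.toFinsupp_singleton, one_mul]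

theorem opProd_aNeg_xPow (μ s : Multiset ℕ+) :
    opProd (aNeg F) (aNeg_commute F) μ (xPow s) = xPow (μ + s) := by
  induction μ using Multiset.induction_on with
  | empty => simp [opProd_zero]
  | cons r μ ih => rw [opProd_cons, Module.End.mul_apply, ih, aNeg_xPow, Multiset.cons_add]

theorem aPos_xPow (κ : ℕ+ → F) (r : ℕ+) (s : Multiset ℕ+) :
    aPos F κ r (xPow s) = (κ r * s.count r) • xPow (s.erase r) := by
  have herase : Multiset.toFinsupp s - Finsupp.single r 1 = Multiset.toFinsupp (s.erase r) := by
    ext a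
    rcases eq_or_ne a r with rfl | h
    · simp
    · simp [h, Multiset.count_erase_of_ne]
  rw [aPos, LinearMap.smul_apply, Derivation.coeFn_coe, xPow, pderiv_monomial, herase, xPow,
    smul_monomial, smul_monomial, Multiset.toFinsupp_apply, smul_eq_mul]
  ring_nf

theorem exists_opProd_aPos_xPow {κ : ℕ+ → F} (hκ : ∀ r, κ r ≠ 0) (ν s : Multiset ℕ+) :
    ∃ a : F, opProd (aPos F κ) (aPos_commute F κ) ν (xPow s) = a • xPow (s - ν) ∧
      (a ≠ 0 ↔ ν ≤ s) := by
  induction ν using Multiset.induction_on generalizing s with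
  | empty => exact ⟨1, by simp [opProd_zero], by simp⟩
  | cons r ν ih =>
    obtain ⟨a, ha, ha0⟩ := ih (s.erase r)
    refine ⟨κ r * s.count r * a, ?_, ?_⟩
    · rw [opProd_cons', Module.End.mul_apply, aPos_xPow, map_smul, ha, smul_smul,
        Multiset.sub_cons]
    · rw [Multiset.cons_le_iff_mem_and_le_erase, ← ha0]
      simp [hκ r]

theorem exists_aStar_mul_aLow_xPow {κ : ℕ+ → F} (hκ : ∀ r, κ r ≠ 0) (μ ν s : Multiset ℕ+) :
    ∃ a : F, (aStar F μ * aLow F κ ν) (xPow s) = a • xPow (μ + (s - ν)) ∧ (a ≠ 0 ↔ ν ≤ s) := by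
  obtain ⟨a, ha, ha0⟩ := exists_opProd_aPos_xPow hκ ν s
  refine ⟨(mfact μ : F)⁻¹ * ((mfact ν : F)⁻¹ * a), ?_, ?_⟩
  · rw [Module.End.mul_apply, aStar, aLow, LinearMap.smul_apply, LinearMap.smul_apply, ha,
      map_smul, map_smul, opProd_aNeg_xPow, smul_smul, smul_smul, mul_assoc]
  · simp [ha0, (mfact_pos _).ne']

theorem coord_xPow_tmul_xPow (s t s' t' : Multiset ℕ+) :
    ((basisMonomials ℕ+ F).tensorProduct (basisMonomials ℕ+ F)).coord
        (Multiset.toFinsupp s', Multiset.toFinsupp t') (xPow s ⊗ₜ[F] xPow t)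
      = if s = s' ∧ t = t' then 1 else 0 := by
  have hB : ∀ u, (monomial u 1 : PP F) = basisMonomials ℕ+ F u := by simp
  rw [xPow, xPow, hB, hB, ← Module.Basis.tensorProduct_apply, Module.Basis.coord_apply,
    Module.Basis.repr_self, Finsupp.single_apply]
  simp

def normalOrdered (κ : ℕ+ → F) (p : Quad) : Module.End F (PP F ⊗[F] PP F) :=
  TensorProduct.map (aStar F p.1 * aLow F κ p.2.2.1) (aStar F p.2.1 * aLow F κ p.2.2.2)

theorem exists_normalOrdered_xPow_tmul {κ : ℕ+ → F} (hκ : ∀ r, κ r ≠ 0) (p : Quad)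
    (s t : Multiset ℕ+) :
    ∃ a : F, normalOrdered κ p (xPow s ⊗ₜ xPow t)
        = a • (xPow (p.1 + (s - p.2.2.1)) ⊗ₜ xPow (p.2.1 + (t - p.2.2.2))) ∧
      (a ≠ 0 ↔ p.2.2.1 ≤ s ∧ p.2.2.2 ≤ t) := by
  obtain ⟨a, ha, ha0⟩ := exists_aStar_mul_aLow_xPow hκ p.1 p.2.2.1 s
  obtain ⟨b, hb, hb0⟩ := exists_aStar_mul_aLow_xPow hκ p.2.1 p.2.2.2 t
  refine ⟨a * b, ?_, ?_⟩
  · rw [normalOrdered, TensorProduct.map_tmul, ha, hb, TensorProduct.smul_tmul_smul]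
  · rw [← ha0, ← hb0, mul_ne_zero_iff]

theorem linearIndependent_normalOrdered {κ : ℕ+ → F} (hκ : ∀ r, κ r ≠ 0) :
    LinearIndependent F (normalOrdered κ) := by
  rw [LinearIndependent, injective_iff_map_eq_zero]
  intro l hl
  by_contra hl0
  obtain ⟨⟨μ₀, ρ₀, ν₀, σ₀⟩, hp₀, hmin⟩ := l.support.exists_min_image
    (fun p => Multiset.card p.2.2.1 + Multiset.card p.2.2.2) (Finsupp.support_nonempty_iff.2 hl0)
  set e := ((basisMonomials ℕ+ F).tensorProduct (basisMonomials ℕ+ F)).coord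
    (Multiset.toFinsupp μ₀, Multiset.toFinsupp ρ₀)
  set x : PP F ⊗[F] PP F := xPow ν₀ ⊗ₜ xPow σ₀
  have honly : ∀ p ∈ l.support, e (normalOrdered κ p x) ≠ 0 → p = (μ₀, ρ₀, ν₀, σ₀) := by
    rintro ⟨μ, ρ, ν, σ⟩ hp he
    obtain ⟨a, ha, ha0⟩ := exists_normalOrdered_xPow_tmul hκ (μ, ρ, ν, σ) ν₀ σ₀
    dsimp only at ha ha0
    rw [ha, map_smul, coord_xPow_tmul_xPow, smul_eq_mul] at he
    obtain ⟨hν, hσ⟩ := ha0.1 (left_ne_zero_of_mul he)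
    have hcard : Multiset.card ν₀ + Multiset.card σ₀ ≤ Multiset.card ν + Multiset.card σ :=
      hmin _ hp
    have := Multiset.card_le_card hν
    have := Multiset.card_le_card hσ
    obtain rfl := Multiset.eq_of_le_of_card_le hν (by omega)
    obtain rfl := Multiset.eq_of_le_of_card_le hσ (by omega)
    simp only [tsub_self, add_zero] at he
    obtain ⟨rfl, rfl⟩ := (ite_ne_right_iff.1 (right_ne_zero_of_mul he)).1
    rfl
  have key := congr(e ($hl x))
  rw [Finsupp.linearCombination_apply, Finsupp.sum, LinearMap.sum_apply, map_sum,
    Finset.sum_eq_single_of_mem _ hp₀ fun p hp hne => by_contra fun h => hne (honly p hp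
      (right_ne_zero_of_mul (by rwa [LinearMap.smul_apply, map_smul, smul_eq_mul] at h)))] at key
  obtain ⟨a, ha, ha0⟩ := exists_normalOrdered_xPow_tmul hκ (μ₀, ρ₀, ν₀, σ₀) ν₀ σ₀
  rw [LinearMap.smul_apply, ha, map_smul, map_smul, coord_xPow_tmul_xPow, LinearMap.zero_apply,
    map_zero] at key
  simp only [tsub_self, add_zero, and_self, if_true, smul_eq_mul, mul_one, mul_eq_zero] at key
  exact key.elim (Finsupp.mem_support_iff.1 hp₀) (ha0.2 ⟨le_rfl, le_rfl⟩)

theorem op1_mul_map_sub (x f g : Module.End F (PP F)) :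
    op1 F x * TensorProduct.map f g - TensorProduct.map f g * op1 F x
      = TensorProduct.map (x * f - f * x) g :=
  TensorProduct.ext' fun a b => by simp [op1, TensorProduct.sub_tmul]

theorem op2_mul_map_sub (x f g : Module.End F (PP F)) :
    op2 F x * TensorProduct.map f g - TensorProduct.map f g * op2 F x
      = TensorProduct.map f (x * g - g * x) :=
  TensorProduct.ext' fun a b => by simp [op2, TensorProduct.tmul_sub]

theorem aPos_coproduct_mul_normalOrdered_sub (κ : ℕ+ → F) (w : F) (r : ℕ+) (p : Quad) :
    (op1 F (aPos F κ r) + w • op2 F (aPos F κ r)) * normalOrdered κ p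
        - normalOrdered κ p * (op1 F (aPos F κ r) + w • op2 F (aPos F κ r))
      = κ r • ((if r ∈ p.1 then normalOrdered κ (p.1.erase r, p.2) else 0)
          + w • if r ∈ p.2.1 then normalOrdered κ (p.1, p.2.1.erase r, p.2.2) else 0) := by
  obtain ⟨μ, ρ, ν, σ⟩ := p
  have hsplit : ∀ A B N : Module.End F (PP F ⊗[F] PP F),
      (A + w • B) * N - N * (A + w • B) = (A * N - N * A) + w • (B * N - N * B) := by
    intros
    simp only [add_mul, mul_add, smul_mul_assoc, mul_smul_comm]
    module
  rw [hsplit, normalOrdered, op1_mul_map_sub, op2_mul_map_sub, aPos_mul_aStar_mul_aLow_sub,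
    aPos_mul_aStar_mul_aLow_sub]
  split_ifs <;> simp [normalOrdered, TensorProduct.map_smul_left, TensorProduct.map_smul_right,
    smul_comm w]

theorem aNeg_coproduct_mul_normalOrdered_sub (κ : ℕ+ → F) (w : F) (r : ℕ+) (p : Quad) :
    (w • op1 F (aNeg F r) + op2 F (aNeg F r)) * normalOrdered κ p
        - normalOrdered κ p * (w • op1 F (aNeg F r) + op2 F (aNeg F r))
      = (-κ r) • ((w • if r ∈ p.2.2.1 then normalOrdered κ (p.1, p.2.1, p.2.2.1.erase r, p.2.2.2)
          else 0) + if r ∈ p.2.2.2 then normalOrdered κ (p.1, p.2.1, p.2.2.1, p.2.2.2.erase r)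
          else 0) := by
  obtain ⟨μ, ρ, ν, σ⟩ := p
  have hsplit : ∀ A B N : Module.End F (PP F ⊗[F] PP F),
      (w • A + B) * N - N * (w • A + B) = w • (A * N - N * A) + (B * N - N * B) := by
    intros
    simp only [add_mul, mul_add, smul_mul_assoc, mul_smul_comm]
    module
  rw [hsplit, normalOrdered, op1_mul_map_sub, op2_mul_map_sub, aNeg_mul_aStar_mul_aLow_sub,
    aNeg_mul_aStar_mul_aLow_sub]
  split_ifs <;> simp only [normalOrdered, TensorProduct.map_smul_left,
    TensorProduct.map_smul_right, TensorProduct.map_zero_left, TensorProduct.map_zero_right,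
    smul_add, smul_zero, add_zero, zero_add, smul_comm w]

theorem coeff_relation_of_commute_aPos_coproduct {κ : ℕ+ → F} (hκ : ∀ r, κ r ≠ 0)
    {c : Quad →₀ F} {w : F} {r : ℕ+}
    (h : Commute (Tmat F κ c) (op1 F (aPos F κ r) + w • op2 F (aPos F κ r)))
    (μ ρ ν σ : Multiset ℕ+) :
    c (r ::ₘ μ, ρ, ν, σ) + w * c (μ, r ::ₘ ρ, ν, σ) = 0 := by
  have hcons : Function.Injective (r ::ₘ ·) := fun _ _ => (Multiset.cons_inj_right r).1
  have hI₁ : Function.Injective (Prod.map (r ::ₘ ·) id : Quad → Quad) :=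
    hcons.prodMap Function.injective_id
  have hI₂ : Function.Injective (Prod.map id (Prod.map (r ::ₘ ·) id) : Quad → Quad) :=
    Function.injective_id.prodMap (hcons.prodMap Function.injective_id)
  have hΦ := (linearIndependent_normalOrdered hκ).map_eq_zero_of_commute (hκ r)
    (Φ := Finsupp.lcomapDomain _ hI₁ + w • Finsupp.lcomapDomain _ hI₂) (fun p => ?_) h.symm
  · simpa using DFunLike.congr_fun hΦ (μ, ρ, ν, σ)
  rw [aPos_coproduct_mul_normalOrdered_sub]
  simp only [LinearMap.add_apply, LinearMap.smul_apply, Finsupp.lcomapDomain_apply,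
    Finsupp.comapDomain_single_eq_ite hI₁ (g := Prod.map (·.erase r) id) (P := fun p => r ∈ p.1)
      (fun p hp => Prod.ext (Multiset.cons_erase hp) rfl) (fun p => Multiset.mem_cons_self r p.1),
    Finsupp.comapDomain_single_eq_ite hI₂ (g := Prod.map id (Prod.map (·.erase r) id))
      (P := fun p => r ∈ p.2.1) (fun p hp => Prod.ext rfl (Prod.ext (Multiset.cons_erase hp) rfl))
      (fun p => Multiset.mem_cons_self r p.2.1)]
  split_ifs <;> simp [Prod.map]

theorem coeff_relation_of_commute_aNeg_coproduct {κ : ℕ+ → F} (hκ : ∀ r, κ r ≠ 0)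
    {c : Quad →₀ F} {w : F} {r : ℕ+}
    (h : Commute (Tmat F κ c) (w • op1 F (aNeg F r) + op2 F (aNeg F r)))
    (μ ρ ν σ : Multiset ℕ+) :
    w * c (μ, ρ, r ::ₘ ν, σ) + c (μ, ρ, ν, r ::ₘ σ) = 0 := by
  have hcons : Function.Injective (r ::ₘ ·) := fun _ _ => (Multiset.cons_inj_right r).1
  have hI₃ : Function.Injective
      (Prod.map id (Prod.map id (Prod.map (r ::ₘ ·) id)) : Quad → Quad) :=
    Function.injective_id.prodMap
      (Function.injective_id.prodMap (hcons.prodMap Function.injective_id))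
  have hI₄ : Function.Injective
      (Prod.map id (Prod.map id (Prod.map id (r ::ₘ ·))) : Quad → Quad) :=
    Function.injective_id.prodMap
      (Function.injective_id.prodMap (Function.injective_id.prodMap hcons))
  have hΦ := (linearIndependent_normalOrdered hκ).map_eq_zero_of_commute (neg_ne_zero.2 (hκ r))
    (Φ := w • Finsupp.lcomapDomain _ hI₃ + Finsupp.lcomapDomain _ hI₄) (fun p => ?_) h.symm
  · simpa using DFunLike.congr_fun hΦ (μ, ρ, ν, σ)
  rw [aNeg_coproduct_mul_normalOrdered_sub]
  simp only [LinearMap.add_apply, LinearMap.smul_apply, Finsupp.lcomapDomain_apply,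
    Finsupp.comapDomain_single_eq_ite hI₃ (g := Prod.map id (Prod.map id (Prod.map (·.erase r) id)))
      (P := fun p => r ∈ p.2.2.1)
      (fun p hp => Prod.ext rfl (Prod.ext rfl (Prod.ext (Multiset.cons_erase hp) rfl)))
      (fun p => Multiset.mem_cons_self r p.2.2.1),
    Finsupp.comapDomain_single_eq_ite hI₄ (g := Prod.map id (Prod.map id (Prod.map id (·.erase r))))
      (P := fun p => r ∈ p.2.2.2)
      (fun p hp => Prod.ext rfl (Prod.ext rfl (Prod.ext rfl (Multiset.cons_erase hp))))
      (fun p => Multiset.mem_cons_self r p.2.2.2)]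
  split_ifs <;> simp [Prod.map]

end

/-- operator form of Proposition 4.2: if `T` commutes with the Fock
images `Δ(a_r) = a_r ⊗ id + q^{−r}(id ⊗ a_r)` (resp. `Δ(a_{−r}) = q^r(a_{−r} ⊗ id) + id ⊗ a_{−r}`)
for every `r ≥ 1`, then the coefficients satisfy
`F(μ+{r},ρ,ν,σ) + q^{−r} F(μ,ρ+{r},ν,σ) = 0` (resp.
`F(μ,ρ,ν+{r},σ) + q^{−r} F(μ,ρ,ν,σ+{r}) = 0`). -/
theorem statement7 (F : Type*) [Field F] [CharZero F] (q : F) (hq : q ≠ 0)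
    (κ : ℕ+ → F) (hκ : ∀ r : ℕ+, κ r ≠ 0)
    (c : (Multiset ℕ+ × Multiset ℕ+ × Multiset ℕ+ × Multiset ℕ+) →₀ F) :
    ((∀ r : ℕ+,
        Commute (Tmat F κ c) (op1 F (aPos F κ r) + (q⁻¹) ^ (r : ℕ) • op2 F (aPos F κ r))) →
      ∀ (r : ℕ+) (μ ρ ν σ : Multiset ℕ+),
        c (r ::ₘ μ, ρ, ν, σ) + (q⁻¹) ^ (r : ℕ) * c (μ, r ::ₘ ρ, ν, σ) = 0) ∧
    ((∀ r : ℕ+,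
        Commute (Tmat F κ c) (q ^ (r : ℕ) • op1 F (aNeg F r) + op2 F (aNeg F r))) →
      ∀ (r : ℕ+) (μ ρ ν σ : Multiset ℕ+),
        c (μ, ρ, r ::ₘ ν, σ) + (q⁻¹) ^ (r : ℕ) * c (μ, ρ, ν, r ::ₘ σ) = 0) := by
  refine ⟨fun h r => coeff_relation_of_commute_aPos_coproduct hκ (h r),
    fun h r μ ρ ν σ => ?_⟩
  have hrel := coeff_relation_of_commute_aNeg_coproduct hκ (h r) μ ρ ν σ
  calc c (μ, ρ, r ::ₘ ν, σ) + (q⁻¹) ^ (r : ℕ) * c (μ, ρ, ν, r ::ₘ σ)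
      = (q⁻¹) ^ (r : ℕ) * (q ^ (r : ℕ) * c (μ, ρ, r ::ₘ ν, σ) + c (μ, ρ, ν, r ::ₘ σ)) := by
        rw [mul_add, ← mul_assoc, ← mul_pow, inv_mul_cancel₀ hq, one_pow, one_mul]
    _ = 0 := by rw [hrel, mul_zero]
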